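/- Every commutative two-dimensional Itô *-algebra 𝔞 (with death element d) is, as a *-algebra, isomorphic either to the Wiener algebra (second-order nilpotent: a b ∈ ℂ d and a b c = 0 for all a,b,c, with a⋆ a = |ξ|² d for a parametrized by (α, ξ)) or to the Poisson algebra (ℂ d ⊕ ℂ c with c⋆ = c, c² = c + d up to normalization, equivalently containing a self-adjoint idempotent-like element modulo d); in particular, a two-dimensional commutative *-algebra spanned by d (with d·x = 0 = x·d for all x and d⋆ = d) and one additional generator b with b⋆b ∈ span(d, b) is isomorphic to one of these two types according to whether b⋆b ∈ ℂd or not. -/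

import Mathlib

open ComplexOrder
open scoped ComplexStarModule

/-!
Since `b = ℜ b + I • ℑ b`, one of the two self-adjoint parts of `b` has a nonzero `b`-coordinate,
so the algebra has a self-adjoint generator `s`, with `d, s` a basis. As `d` annihilates
everything, `s * s = star s * s` is a positive multiple of `star b * b`, and `s * s = p • d + q • s`
with `p, q` real because `s * s` is self-adjoint. If `q = 0`, positivity of `l` gives
`p = l (star s * s) ≥ 0` (Wiener type); otherwise `q⁻¹ • s` is self-adjoint with
`(q⁻¹ • s)² = q⁻¹ • s + (p / q²) • d` (Poisson type).
-/

section LinearAlgebra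
variable {K V : Type*} [Field K] [AddCommGroup V] [Module K V] {x y : V}

theorem exists_eq_smul_add_smul_of_span_pair (hspan : ∀ z : V, ∃ α β : K, z = α • x + β • y)
    {α β : K} (hβ : β ≠ 0) (z : V) : ∃ p q : K, z = p • x + q • (α • x + β • y) := by
  obtain ⟨α', β', rfl⟩ := hspan z
  refine ⟨α' - β' / β * α, β' / β, ?_⟩
  match_scalars
  · field_simp
    ring
  · field_simp

theorem LinearIndependent.pair_smul_add_smul (h : LinearIndependent K ![x, y])
    {α β : K} (hβ : β ≠ 0) : LinearIndependent K ![x, α • x + β • y] := by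
  simpa using (LinearIndependent.pair_add_smul_add_smul_iff (x := x) (y := y) (1 : K) 0 α β).mpr
    ⟨h, by simpa⟩

end LinearAlgebra

theorem IsSelfAdjoint.of_smul_add_smul {R M : Type*} [CommRing R] [StarRing R] [AddCommGroup M]
    [Module R M] [StarAddMonoid M] [StarModule R M] {x y : M} (hx : IsSelfAdjoint x)
    (hy : IsSelfAdjoint y) (hind : LinearIndependent R ![x, y]) {p q : R}
    (h : IsSelfAdjoint (p • x + q • y)) : IsSelfAdjoint p ∧ IsSelfAdjoint q :=
  hind.eq_of_pair <| by rw [← h.star_eq, star_add, star_smul, star_smul, hx.star_eq, hy.star_eq]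

theorem exists_isSelfAdjoint_smul_add_smul {M : Type*} [AddCommGroup M] [Module ℂ M]
    [StarAddMonoid M] [StarModule ℂ M] {d b : M} (hspan : ∀ x : M, ∃ α β : ℂ, x = α • d + β • b)
    (hindep : ∀ α : ℂ, b ≠ α • d) : ∃ α β : ℂ, β ≠ 0 ∧ IsSelfAdjoint (α • d + β • b) := by
  obtain ⟨α₁, β₁, h₁⟩ := hspan (ℜ b)
  obtain ⟨α₂, β₂, h₂⟩ := hspan (ℑ b)
  by_cases hβ₁ : β₁ = 0
  · by_cases hβ₂ : β₂ = 0
    · refine absurd ?_ (hindep (α₁ + Complex.I * α₂))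
      rw [← realPart_add_I_smul_imaginaryPart b, h₁, h₂, hβ₁, hβ₂]
      module
    · exact ⟨α₂, β₂, hβ₂, h₂ ▸ (ℑ b).2⟩
  · exact ⟨α₁, β₁, hβ₁, h₁ ▸ (ℜ b).2⟩

section AnnihilatingElement
variable {R A : Type*} [CommSemiring R] [NonUnitalNonAssocSemiring A] [Module R A]
  [SMulCommClass R A A] [IsScalarTower R A A] {d : A}

theorem smul_add_mul_smul_add (hdzero : ∀ x : A, d * x = 0 ∧ x * d = 0) (α α' : R) (x y : A) :
    (α • d + x) * (α' • d + y) = x * y := by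
  simp only [add_mul, mul_add, smul_mul_assoc, mul_smul_comm, (hdzero _).1, (hdzero _).2,
    smul_zero, zero_add]

theorem star_smul_add_smul_mul_self [StarRing R] [StarRing A] [StarModule R A]
    {b : A} (hdstar : star d = d) (hdzero : ∀ x : A, d * x = 0 ∧ x * d = 0) (α β : R) :
    star (α • d + β • b) * (α • d + β • b) = (star β * β) • (star b * b) := by
  rw [star_add, star_smul, star_smul, hdstar, smul_add_mul_smul_add hdzero, smul_mul_smul_comm]

end AnnihilatingElement

theorem exists_nonneg_of_mul_self_eq_smul {A : Type*} [NonUnitalNonAssocSemiring A] [StarMul A]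
    [Module ℂ A] {d s : A} (l : A →ₗ[ℂ] ℂ) (hld : l d = 1)
    (hlpos : ∀ a : A, 0 ≤ l (star a * a)) (hs : IsSelfAdjoint s) {p : ℂ} (hss : s * s = p • d) :
    ∃ lam : ℝ, 0 ≤ lam ∧ s * s = (lam : ℂ) • d := by
  have hp : 0 ≤ p := by simpa [hs.star_eq, hss, hld] using hlpos s
  exact ⟨p.re, (Complex.nonneg_iff.mp hp).1, by rw [hss, ← Complex.eq_re_of_ofReal_le hp]⟩

theorem inv_smul_mul_inv_smul {K A : Type*} [Field K] [NonUnitalNonAssocSemiring A] [Module K A]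
    [SMulCommClass K A A] [IsScalarTower K A A] {d s : A} {p q : K} (hq : q ≠ 0)
    (hss : s * s = p • d + q • s) :
    (q⁻¹ • s) * (q⁻¹ • s) = q⁻¹ • s + (q⁻¹ * q⁻¹ * p) • d := by
  rw [smul_mul_smul_comm, hss]
  match_scalars <;> field_simp

theorem two_dim_commutative_ito_algebra_classification_general
    {A : Type*} [NonUnitalRing A] [Module ℂ A] [StarRing A] [StarModule ℂ A]
    [SMulCommClass ℂ A A] [IsScalarTower ℂ A A]
    (d b : A)
    (hdstar : star d = d)
    (hdzero : ∀ x : A, d * x = 0 ∧ x * d = 0)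
    (hspan : ∀ x : A, ∃ α β : ℂ, x = α • d + β • b)
    (hd0 : d ≠ 0)
    (hindep : ∀ α : ℂ, b ≠ α • d)
    (l : A →ₗ[ℂ] ℂ) (hld : l d = 1)
    (hlpos : ∀ a : A, 0 ≤ l (star a * a)) :
    ∃ α β : ℂ, β ≠ 0 ∧ star (α • d + β • b) = α • d + β • b ∧
      (((∃ lam : ℝ, 0 ≤ lam ∧
          (α • d + β • b) * (α • d + β • b) = (lam : ℂ) • d) ∧
          ∃ μ : ℂ, star b * b = μ • d) ∨
        ((∃ lam : ℂ,
          (α • d + β • b) * (α • d + β • b) = (α • d + β • b) + lam • d) ∧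
          ∀ μ : ℂ, star b * b ≠ μ • d)) := by
  obtain ⟨α, β, hβ, hs⟩ := exists_isSelfAdjoint_smul_add_smul hspan hindep
  set s := α • d + β • b with hs_def
  have hind : LinearIndependent ℂ ![d, s] :=
    ((LinearIndependent.pair_iff' hd0).mpr fun c h => hindep c h.symm).pair_smul_add_smul hβ
  obtain ⟨p, q, hss⟩ := exists_eq_smul_add_smul_of_span_pair hspan hβ (s * s)
  have hbb : (star β * β) • (star b * b) = s * s := by
    rw [← star_smul_add_smul_mul_self hdstar hdzero, hs.star_eq]
  have hββ : star β * β ≠ 0 := mul_ne_zero (star_ne_zero.mpr hβ) hβ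
  by_cases hq : q = 0
  · rw [hq, zero_smul, add_zero] at hss
    refine ⟨α, β, hβ, hs, Or.inl ⟨exists_nonneg_of_mul_self_eq_smul l hld hlpos hs hss,
      (star β * β)⁻¹ * p, ?_⟩⟩
    rw [mul_smul, ← hss, ← hbb, inv_smul_smul₀ hββ]
  · have hss_sa : IsSelfAdjoint (s * s) := by
      simpa only [hs.star_eq] using IsSelfAdjoint.star_mul_self s
    have hq_sa : IsSelfAdjoint q :=
      (IsSelfAdjoint.of_smul_add_smul hdstar hs hind (hss ▸ hss_sa)).2
    have hqs : (q⁻¹ * α) • d + (q⁻¹ * β) • b = q⁻¹ • s := by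
      rw [hs_def, smul_add, smul_smul, smul_smul]
    refine ⟨q⁻¹ * α, q⁻¹ * β, mul_ne_zero (inv_ne_zero hq) hβ, ?_, Or.inr ⟨?_, fun μ hμ => hq ?_⟩⟩
    · rw [hqs]
      exact hq_sa.inv₀.smul hs
    · rw [hqs]
      exact ⟨_, inv_smul_mul_inv_smul hq hss⟩
    · rw [← hbb, hμ, smul_smul, ← add_zero (_ • d), ← zero_smul ℂ s] at hss
      exact (hind.eq_of_pair hss.symm).2

/-- every commutative two-dimensional Itô *-algebra
`𝔞 = ℂd ⊕ ℂb` — a commutative complex *-algebra with a central death element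
`d` (`d⋆ = d`, `d·x = 0 = x·d`), spanned by `d` and one additional generator
`b`, carrying a positive linear functional `l` with `l(d) = 1` — is of
Wiener/Newton or of Poisson type: the generator can be renormalized to a
self-adjoint `b' = αd + βb` (`β ≠ 0`) with either `b'² = λd`, `λ ≥ 0`
(Wiener type, second-order nilpotent since products land in `ℂd` which is
annihilating) or `b'² = b' + λd` (Poisson type); the first case occurs
exactly when `b⋆b ∈ ℂd`. -/
theorem two_dim_commutative_ito_algebra_classification
    {A : Type*} [NonUnitalRing A] [Module ℂ A] [StarRing A] [StarModule ℂ A]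
    [SMulCommClass ℂ A A] [IsScalarTower ℂ A A]
    (d b : A)
    (hcomm : ∀ x y : A, x * y = y * x)
    (hdstar : star d = d)
    (hdzero : ∀ x : A, d * x = 0 ∧ x * d = 0)
    (hspan : ∀ x : A, ∃ α β : ℂ, x = α • d + β • b)
    (hd0 : d ≠ 0)
    (hindep : ∀ α : ℂ, b ≠ α • d)
    (l : A →ₗ[ℂ] ℂ) (hld : l d = 1)
    (hlpos : ∀ a : A, 0 ≤ l (star a * a)) :
    ∃ α β : ℂ, β ≠ 0 ∧ star (α • d + β • b) = α • d + β • b ∧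
      (((∃ lam : ℝ, 0 ≤ lam ∧
          (α • d + β • b) * (α • d + β • b) = (lam : ℂ) • d) ∧
          ∃ μ : ℂ, star b * b = μ • d) ∨
        ((∃ lam : ℂ,
          (α • d + β • b) * (α • d + β • b) = (α • d + β • b) + lam • d) ∧
          ∀ μ : ℂ, star b * b ≠ μ • d)) :=
  two_dim_commutative_ito_algebra_classification_general d b hdstar hdzero hspan hd0 hindep l hld
    hlpos
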